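/- Let S = {s_1, s_2, s_3} with 1 < s_1 < s_2 < s_3 and gcd(s_1, s_2, s_3) = 1, and suppose S is not greedy. Then the smallest counterexample k for S satisfies k = s_2·y for some positive integer y, and there exist positive integers x, z with s_1·x + s_3·z = s_2·y and y < x + z. -/
import Mathlib


open Finset

/-- `a` is a representation of `k` with respect to the denominations `s`:
a vector of nonnegative integers with `∑ i, a i * s i = k`. -/
def IsRep {t : ℕ} (s : Fin t → ℕ) (k : ℕ) (a : Fin t → ℕ) : Prop :=
  ∑ i, a i * s i = k

/-- `k` is representable with respect to `s`. -/
def Representable {t : ℕ} (s : Fin t → ℕ) (k : ℕ) : Prop :=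
  ∃ a, IsRep s k a

/-- `MinCost_S(k)`: the minimum cost `∑ i, a i` over all representations `a` of `k`. -/
noncomputable def minCost {t : ℕ} (s : Fin t → ℕ) (k : ℕ) : ℕ :=
  sInf {c | ∃ a, IsRep s k a ∧ ∑ i, a i = c}

/-- `a` is the greedy representation of `k`: the representation whose reversed vector
`(a_t, …, a_1)` is greatest in lexicographic order among the reversed vectors of all
representations of `k`. -/
def IsGreedyRep {t : ℕ} (s : Fin t → ℕ) (k : ℕ) (a : Fin t → ℕ) : Prop :=
  IsRep s k a ∧
    ∀ b, IsRep s k b → b = a ∨ ∃ i, b i < a i ∧ ∀ j, i < j → b j = a j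

/-- `GreedyCost_S(k)`: the cost of the greedy representation of `k`
(the greedy representation is unique when it exists). -/
noncomputable def greedyCost {t : ℕ} (s : Fin t → ℕ) (k : ℕ) : ℕ :=
  sInf {c | ∃ a, IsGreedyRep s k a ∧ ∑ i, a i = c}

/-- The final remainder `r_0` of the naive greedy algorithm: for `i = t` down to `1`,
replace the current remainder `r` by `r % s_i`. -/
def greedyRem {t : ℕ} (s : Fin t → ℕ) (k : ℕ) : ℕ :=
  ((List.ofFn s).reverse).foldl (· % ·) k

/-- A counterexample for `S`: a representable `k > 0` with `MinCost_S(k) < GreedyCost_S(k)`. -/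
def IsCounterexample {t : ℕ} (s : Fin t → ℕ) (k : ℕ) : Prop :=
  0 < k ∧ Representable s k ∧ minCost s k < greedyCost s k

/-- A witness for `S`: a representable `k > 0` such that for some generator `s i` with
`k - s i` nonnegative and representable, `GreedyCost_S(k) > GreedyCost_S(k - s i) + 1`. -/
def IsWitness {t : ℕ} (s : Fin t → ℕ) (k : ℕ) : Prop :=
  0 < k ∧ Representable s k ∧ ∃ i : Fin t, s i ≤ k ∧ Representable s (k - s i) ∧
    greedyCost s (k - s i) + 1 < greedyCost s k

section Aux

variable {t : ℕ} (s : Fin t → ℕ)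

theorem isGreedyRep_unique {k : ℕ} {a b : Fin t → ℕ}
    (ha : IsGreedyRep s k a) (hb : IsGreedyRep s k b) : a = b := by
  rcases ha.2 b hb.1 with h | ⟨i, hlt, hup⟩
  · exact h.symm
  rcases hb.2 a ha.1 with h | ⟨i', hlt', hup'⟩
  · exact h
  exfalso
  rcases lt_trichotomy i i' with h | rfl | h
  · exact absurd (hup i' h) (by omega)
  · omega
  · exact absurd (hup' i h) (by omega)

theorem greedyCost_eq_of {k : ℕ} {a : Fin t → ℕ} (ha : IsGreedyRep s k a) :
    greedyCost s k = ∑ i, a i := by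
  have hset : {c | ∃ b, IsGreedyRep s k b ∧ ∑ i, b i = c} = {∑ i, a i} := by
    ext c
    simp only [Set.mem_setOf_eq, Set.mem_singleton_iff]
    constructor
    · rintro ⟨b, hb, rfl⟩
      rw [isGreedyRep_unique s hb ha]
    · rintro rfl
      exact ⟨a, ha, rfl⟩
  rw [greedyCost, hset, csInf_singleton]

theorem minCost_le {k : ℕ} {a : Fin t → ℕ} (ha : IsRep s k a) :
    minCost s k ≤ ∑ i, a i := Nat.sInf_le ⟨a, ha, rfl⟩

theorem exists_min {k : ℕ} (h : Representable s k) :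
    ∃ a, IsRep s k a ∧ ∑ i, a i = minCost s k := by
  obtain ⟨a, ha⟩ := h
  have hne : {c | ∃ b, IsRep s k b ∧ ∑ i, b i = c}.Nonempty := ⟨∑ i, a i, a, ha, rfl⟩
  exact Nat.sInf_mem hne

theorem exists_greedy {k : ℕ} (h : minCost s k < greedyCost s k) :
    ∃ g, IsGreedyRep s k g ∧ ∑ i, g i = greedyCost s k := by
  rcases em (∃ g, IsGreedyRep s k g) with ⟨g, hg⟩ | hne
  · have hne : {c | ∃ a, IsGreedyRep s k a ∧ ∑ i, a i = c}.Nonempty :=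
      ⟨∑ i, g i, g, hg, rfl⟩
    exact Nat.sInf_mem hne
  · exfalso
    have hempty : {c | ∃ a, IsGreedyRep s k a ∧ ∑ i, a i = c} = ∅ := by
      ext c
      simp only [Set.mem_setOf_eq, Set.mem_empty_iff_false, iff_false]
      rintro ⟨a, ha, -⟩
      exact hne ⟨a, ha⟩
    rw [greedyCost, hempty, Nat.sInf_empty] at h
    omega

theorem sum_update_mul (g : Fin t → ℕ) (i : Fin t) (v : ℕ) :
    (∑ j, Function.update g i v j * s j) + g i * s i
      = (∑ j, g j * s j) + v * s i := by
  have h1 : (fun j => Function.update g i v j * s j)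
      = Function.update (fun j => g j * s j) i (v * s i) := by
    funext j
    by_cases hj : j = i
    · subst hj; simp
    · simp [Function.update_of_ne hj]
  rw [h1, Finset.sum_update_of_mem (Finset.mem_univ i),
    Finset.sum_eq_sum_sdiff_singleton_add (Finset.mem_univ i) (fun j => g j * s j)]
  ring

theorem sum_update_add (g : Fin t → ℕ) (i : Fin t) (v : ℕ) :
    (∑ j, Function.update g i v j) + g i = (∑ j, g j) + v := by
  rw [Finset.sum_update_of_mem (Finset.mem_univ i),
    Finset.sum_eq_sum_sdiff_singleton_add (Finset.mem_univ i) g]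
  ring

theorem le_of_isRep {k : ℕ} {a : Fin t → ℕ} {i : Fin t}
    (ha : IsRep s k a) (h : 0 < a i) : s i ≤ k := by
  calc s i ≤ a i * s i := Nat.le_mul_of_pos_left _ h
    _ ≤ ∑ j, a j * s j :=
        Finset.single_le_sum (f := fun j => a j * s j)
          (fun j _ => Nat.zero_le _) (Finset.mem_univ i)
    _ = k := ha

theorem isRep_update_sub {k : ℕ} {a : Fin t → ℕ} {i : Fin t}
    (ha : IsRep s k a) (h : 0 < a i) :
    IsRep s (k - s i) (Function.update a i (a i - 1)) := by
  have hsi := le_of_isRep s ha h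
  have hsum := sum_update_mul s a i (a i - 1)
  have hx : (a i - 1) * s i + s i = a i * s i := by
    obtain ⟨m, hm⟩ : ∃ m, a i = m + 1 := ⟨a i - 1, by omega⟩
    rw [hm]
    simp [Nat.add_mul]
  unfold IsRep at *
  omega

theorem isRep_update_add {k : ℕ} {a : Fin t → ℕ} (i : Fin t)
    (ha : IsRep s k a) :
    IsRep s (k + s i) (Function.update a i (a i + 1)) := by
  have hsum := sum_update_mul s a i (a i + 1)
  have hx : (a i + 1) * s i = a i * s i + s i := by ring
  unfold IsRep at *
  omega

theorem isGreedyRep_sub {k : ℕ} {g : Fin t → ℕ} {i : Fin t}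
    (hg : IsGreedyRep s k g) (hgi : 0 < g i) :
    IsGreedyRep s (k - s i) (Function.update g i (g i - 1)) := by
  have hsi := le_of_isRep s hg.1 hgi
  refine ⟨isRep_update_sub s hg.1 hgi, ?_⟩
  intro b hb
  have hb' : IsRep s k (Function.update b i (b i + 1)) := by
    have := isRep_update_add s i hb
    rwa [Nat.sub_add_cancel hsi] at this
  rcases hg.2 _ hb' with heq | ⟨j, hlt, hup⟩
  · left
    funext j
    by_cases hj : j = i
    · subst hj
      have := congrFun heq j
      simp only [Function.update_self] at this ⊢
      omega
    · have := congrFun heq j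
      simpa [Function.update_of_ne hj] using this
  · right
    by_cases hji : j = i
    · subst hji
      refine ⟨j, ?_, ?_⟩
      · simp only [Function.update_self] at hlt ⊢
        omega
      · intro j' h'
        have hj' : j' ≠ j := ne_of_gt h'
        have h2 := hup j' h'
        rw [Function.update_of_ne hj'] at h2
        rw [Function.update_of_ne hj']
        exact h2
    · refine ⟨j, ?_, ?_⟩
      · rw [Function.update_of_ne hji] at hlt
        rw [Function.update_of_ne hji]
        exact hlt
      · intro j' h'
        by_cases hj' : j' = i
        · subst hj'
          have h2 := hup j' h'
          simp only [Function.update_self] at h2 ⊢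
          omega
        · have h2 := hup j' h'
          rw [Function.update_of_ne hj'] at h2
          rw [Function.update_of_ne hj']
          exact h2

theorem rep_of_single (hpos : ∀ j, 0 < s j) {b : Fin t → ℕ} {i : Fin t}
    (hb : IsRep s (s i) b) (hbi : 0 < b i) : ∑ j, b j = 1 := by
  have h1 : b i * s i ≤ s i := by
    calc b i * s i ≤ ∑ j, b j * s j :=
        Finset.single_le_sum (f := fun j => b j * s j)
          (fun j _ => Nat.zero_le _) (Finset.mem_univ i)
      _ = s i := hb
  have hbi1 : b i = 1 := by
    by_contra hne
    have h2 : 2 ≤ b i := by omega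
    have : 2 * s i ≤ b i * s i := Nat.mul_le_mul_right _ h2
    have := hpos i
    omega
  have hsplit := Finset.sum_eq_sum_sdiff_singleton_add (Finset.mem_univ i)
    (fun j => b j * s j)
  rw [hb, hbi1, one_mul] at hsplit
  have hz : ∑ j ∈ Finset.univ \ {i}, b j * s j = 0 := by omega
  have hz' : ∀ j ∈ Finset.univ \ {i}, b j = 0 := by
    intro j hj
    have h0 := (Finset.sum_eq_zero_iff.mp hz) j hj
    have := hpos j
    rcases Nat.mul_eq_zero.mp h0 with h | h
    · exact h
    · omega
  rw [Finset.sum_eq_sum_sdiff_singleton_add (Finset.mem_univ i) b,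
    Finset.sum_eq_zero hz', hbi1]

theorem kz (hpos : ∀ j, 0 < s j) {k : ℕ} (hk : IsCounterexample s k)
    (hmin : ∀ k', IsCounterexample s k' → k ≤ k')
    {a g : Fin t → ℕ} (ha : IsRep s k a) (hag : ∑ j, a j < greedyCost s k)
    (hg : IsGreedyRep s k g) (i : Fin t) (hai : 0 < a i) (hgi : 0 < g i) :
    False := by
  have hgc := greedyCost_eq_of s hg
  have hsi := le_of_isRep s ha hai
  rcases eq_or_lt_of_le hsi with heq | hlt
  · -- k = s i : both reps are the delta at i, cost 1, contradiction
    have hsa : ∑ j, a j = 1 := rep_of_single s hpos (heq ▸ ha) hai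
    have hsg : ∑ j, g j = 1 := rep_of_single s hpos (heq ▸ hg.1) hgi
    omega
  · set a' := Function.update a i (a i - 1) with ha'def
    have ha' : IsRep s (k - s i) a' := isRep_update_sub s ha hai
    have hsa' : (∑ j, a' j) + a i = (∑ j, a j) + (a i - 1) :=
      sum_update_add a i (a i - 1)
    have hg' := isGreedyRep_sub s hg hgi
    have hsg' : (∑ j, Function.update g i (g i - 1) j) + g i
        = (∑ j, g j) + (g i - 1) := sum_update_add g i (g i - 1)
    have hgc' : greedyCost s (k - s i) = (∑ j, g j) - 1 := by
      rw [greedyCost_eq_of s hg']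
      omega
    have hmc' := minCost_le s ha'
    have hce : IsCounterexample s (k - s i) := by
      refine ⟨by omega, ⟨a', ha'⟩, ?_⟩
      omega
    have := hmin _ hce
    have := hpos i
    omega

end Aux

set_option maxHeartbeats 1000000

/-- For `S = {s₁, s₂, s₃}` with `1 < s₁ < s₂ < s₃`, `gcd(s₁, s₂, s₃) = 1`, if `S` is
not greedy then the smallest counterexample `k` has the form `k = s₂ · y`, and it is a
solution of the Diophantine equation `s₁ x + s₃ z = s₂ y` with `x, y, z` positive
integers satisfying `y < x + z`. -/
theorem smallest_counterexample_structure_three_gens (s : Fin 3 → ℕ)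
    (hmono : StrictMono s) (hone : 1 < s 0)
    (hgcd : Nat.gcd (s 0) (Nat.gcd (s 1) (s 2)) = 1)
    (k : ℕ) (hk : IsCounterexample s k)
    (hmin : ∀ k' : ℕ, IsCounterexample s k' → k ≤ k') :
    ∃ x y z : ℕ, 0 < x ∧ 0 < y ∧ 0 < z ∧ k = s 1 * y ∧
      s 0 * x + s 2 * z = s 1 * y ∧ y < x + z := by
  obtain ⟨hk0, hrep, hlt⟩ := hk
  have hk' : IsCounterexample s k := ⟨hk0, hrep, hlt⟩
  obtain ⟨a, ha, hasum⟩ := exists_min s hrep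
  obtain ⟨g, hg, hgsum⟩ := exists_greedy s hlt
  have hs01 : s 0 < s 1 := hmono (by omega : (0 : Fin 3) < 1)
  have hs12 : s 1 < s 2 := hmono (by omega : (1 : Fin 3) < 2)
  have hpos : ∀ j : Fin 3, 0 < s j := by
    intro j
    have : s 0 ≤ s j := hmono.monotone (Fin.zero_le j)
    omega
  have hag : ∑ j, a j < greedyCost s k := by omega
  have hcostlt : a 0 + a 1 + a 2 < g 0 + g 1 + g 2 := by
    have h1 : ∑ j, a j = a 0 + a 1 + a 2 := by rw [Fin.sum_univ_three]
    have h2 : ∑ j, g j = g 0 + g 1 + g 2 := by rw [Fin.sum_univ_three]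
    omega
  have ha3 : a 0 * s 0 + a 1 * s 1 + a 2 * s 2 = k := by
    have := ha
    rwa [IsRep, Fin.sum_univ_three] at this
  have hg3 : g 0 * s 0 + g 1 * s 1 + g 2 * s 2 = k := by
    have := hg.1
    rwa [IsRep, Fin.sum_univ_three] at this
  have hne : a ≠ g := by
    intro h
    rw [h] at hcostlt
    omega
  obtain ⟨i, hilt, hiup⟩ := (hg.2 a ha).resolve_left hne
  -- Step 1: the optimal representation does not use the largest coin
  have ha2 : a 2 = 0 := by
    by_contra h2
    have ha2' : 0 < a 2 := by omega
    have hg2 : 0 < g 2 := by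
      rcases (by omega : i = 0 ∨ i = 1 ∨ i = 2) with rfl | rfl | rfl
      · have := hiup 2 (by omega); omega
      · have := hiup 2 (by omega); omega
      · omega
    exact kz s hpos hk' hmin ha hag hg 2 ha2' hg2
  -- Step 2: the optimal representation uses the middle coin
  have ha1 : 0 < a 1 := by
    by_contra h1
    have ha1' : a 1 = 0 := by omega
    have ha0 : 0 < a 0 := by
      rcases Nat.eq_zero_or_pos (a 0) with h0 | h0
      · rw [h0, ha1', ha2] at ha3; simp at ha3; omega
      · exact h0
    have hg0 : g 0 = 0 := by
      by_contra hg0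
      exact kz s hpos hk' hmin ha hag hg 0 ha0 (by omega)
    -- k = a0*s0 = g1*s1 + g2*s2, a0 < g1 + g2 : contradiction
    rw [ha1', ha2] at ha3
    rw [hg0] at hg3
    simp only [Nat.zero_mul, Nat.mul_zero, Nat.add_zero, Nat.zero_add] at ha3 hg3
    have hb1 : g 2 * s 1 ≤ g 2 * s 2 := Nat.mul_le_mul (le_refl _) hs12.le
    have hb2 : a 0 * s 0 ≤ a 0 * s 1 := Nat.mul_le_mul (le_refl _) hs01.le
    have hb3 : (a 0 + 1) * s 1 ≤ (g 1 + g 2) * s 1 :=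
      Nat.mul_le_mul (by omega) (le_refl _)
    nlinarith [hpos 1]
  have hg1 : g 1 = 0 := by
    by_contra hg1
    exact kz s hpos hk' hmin ha hag hg 1 ha1 (by omega)
  -- Step 3: the optimal representation does not use the smallest coin
  have ha0 : a 0 = 0 := by
    by_contra h0
    have ha0' : 0 < a 0 := by omega
    have hg0 : g 0 = 0 := by
      by_contra hg0
      exact kz s hpos hk' hmin ha hag hg 0 ha0' (by omega)
    rw [ha2] at ha3
    rw [hg0, hg1] at hg3
    simp only [Nat.zero_mul, Nat.mul_zero, Nat.add_zero, Nat.zero_add] at ha3 hg3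
    -- a0*s0 + a1*s1 = g2*s2, a0 + a1 < g2
    have hb1 : a 0 * s 0 ≤ a 0 * s 1 := Nat.mul_le_mul (le_refl _) hs01.le
    have hb2 : (a 0 + a 1 + 1) * s 1 ≤ g 2 * s 2 :=
      Nat.mul_le_mul (by omega) (by omega)
    nlinarith [hpos 1]
  -- Step 4: the greedy representation uses the largest coin
  have hg2 : 0 < g 2 := by
    rcases (by omega : i = 0 ∨ i = 1 ∨ i = 2) with rfl | rfl | rfl
    · have := hiup 1 (by omega); omega
    · omega
    · omega
  -- Step 5: the greedy representation uses the smallest coin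
  have hg0 : 0 < g 0 := by
    by_contra hg0
    have hg0' : g 0 = 0 := by omega
    rw [ha0, ha2] at ha3
    rw [hg0', hg1] at hg3
    simp only [Nat.zero_mul, Nat.mul_zero, Nat.add_zero, Nat.zero_add] at ha3 hg3
    -- a1*s1 = g2*s2, a1 < g2
    have hb1 : (a 1 + 1) * s 1 ≤ g 2 * s 2 :=
      Nat.mul_le_mul (by omega) (by omega)
    nlinarith [hpos 1]
  refine ⟨g 0, a 1, g 2, hg0, ha1, hg2, ?_, ?_, by omega⟩
  · rw [ha0, ha2] at ha3
    simp only [Nat.zero_mul, Nat.add_zero, Nat.zero_add] at ha3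
    linarith [ha3]
  · rw [ha0, ha2] at ha3
    rw [hg1] at hg3
    simp only [Nat.zero_mul, Nat.mul_zero, Nat.add_zero, Nat.zero_add] at ha3 hg3
    linarith [ha3, hg3]
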